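/- Let B ∈ ℕ and let M be an ∃B-bounded MSC over P and Σ. Then the relation ≺_B is a strict linear order on the event set E of M: it is irreflexive, transitive, and any two distinct events are comparable. -/

import Mathlib

set_option maxHeartbeats 1000000

/-! ## Message sequence charts -/

/-- A message sequence chart (MSC) over processes `P` and labels `Lab`.
Events are natural numbers; `E` is the finite nonempty set of events. -/
structure MSC (P : Type) (Lab : Type) where
  /-- the finite set of events -/
  E : Finset ℕ
  nonemptyE : E.Nonempty
  /-- process edges `→` (direct successor on a process) -/
  proc : ℕ → ℕ → Prop
  /-- message edges `◁` -/
  msg : ℕ → ℕ → Prop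
  /-- location (process) of each event -/
  loc : ℕ → P
  /-- label of each event -/
  lab : ℕ → Lab
  proc_mem : ∀ e f, proc e f → e ∈ E ∧ f ∈ E
  msg_mem : ∀ e f, msg e f → e ∈ E ∧ f ∈ E
  proc_loc : ∀ e f, proc e f → loc e = loc f
  msg_loc : ∀ e f, msg e f → loc e ≠ loc f
  /-- on each process, any two events are comparable w.r.t. `→⁺` -/
  proc_total : ∀ e f, e ∈ E → f ∈ E → loc e = loc f →
    e = f ∨ Relation.TransGen proc e f ∨ Relation.TransGen proc f e
  /-- `→` is the direct-successor (covering) relation of the order `→⁺` -/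
  proc_cover : ∀ e f, proc e f →
    ¬ ∃ g, Relation.TransGen proc e g ∧ Relation.TransGen proc g f
  /-- every event belongs to at most one message edge -/
  msg_once : ∀ e f e' f', msg e f → msg e' f' →
    (e = e' ∨ e = f' ∨ f = e' ∨ f = f') → e = e' ∧ f = f'
  /-- FIFO condition -/
  fifo : ∀ e f e' f', msg e f → msg e' f' → loc e = loc e' → loc f = loc f' →
    (Relation.ReflTransGen proc e e' ↔ Relation.ReflTransGen proc f f')
  /-- `→ ∪ ◁` is acyclic -/
  acyclic : ∀ e, ¬ Relation.TransGen (fun a b => proc a b ∨ msg a b) e e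

namespace MSC

variable {P Lab : Type}

/-- `≤proc`, the reflexive transitive closure of `→`. -/
def procLe (M : MSC P Lab) : ℕ → ℕ → Prop := Relation.ReflTransGen M.proc

/-- `<proc`, the transitive closure of `→`. -/
def procLt (M : MSC P Lab) : ℕ → ℕ → Prop := Relation.TransGen M.proc

/-- the happened-before relation `≤ = (→ ∪ ◁)*`. -/
def hb (M : MSC P Lab) : ℕ → ℕ → Prop :=
  Relation.ReflTransGen (fun a b => M.proc a b ∨ M.msg a b)

/-- Relabelling an MSC (same events and edges, new labelling). -/
def relabel {Γ : Type} (M : MSC P Lab) (γ : ℕ → Γ) : MSC P Γ where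
  E := M.E
  nonemptyE := M.nonemptyE
  proc := M.proc
  msg := M.msg
  loc := M.loc
  lab := γ
  proc_mem := M.proc_mem
  msg_mem := M.msg_mem
  proc_loc := M.proc_loc
  msg_loc := M.msg_loc
  proc_total := M.proc_total
  proc_cover := M.proc_cover
  msg_once := M.msg_once
  fifo := M.fifo
  acyclic := M.acyclic

end MSC

/-! ## Star-free PDL -/

mutual
/-- Event formulas of star-free PDL. -/
inductive EF (P Lab : Type) : Type where
  | proc : P → EF P Lab
  | lab : Lab → EF P Lab
  | or : EF P Lab → EF P Lab → EF P Lab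
  | not : EF P Lab → EF P Lab
  | dia : PF P Lab → EF P Lab → EF P Lab
  | loop : PF P Lab → EF P Lab
/-- Path formulas of star-free PDL. -/
inductive PF (P Lab : Type) : Type where
  | next : PF P Lab
  | prev : PF P Lab
  | msg : P → P → PF P Lab
  | msgInv : P → P → PF P Lab
  | nextG : EF P Lab → PF P Lab
  | prevG : EF P Lab → PF P Lab
  | jump : P → P → PF P Lab
  | test : EF P Lab → PF P Lab
  | comp : PF P Lab → PF P Lab → PF P Lab
  | union : PF P Lab → PF P Lab → PF P Lab
  | inter : PF P Lab → PF P Lab → PF P Lab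
  | compl : PF P Lab → PF P Lab
end

mutual
/-- Satisfaction of event formulas at an event. -/
def EF.sat {P Lab : Type} (M : MSC P Lab) : EF P Lab → ℕ → Prop
  | .proc p, e => e ∈ M.E ∧ M.loc e = p
  | .lab a, e => e ∈ M.E ∧ M.lab e = a
  | .or φ ψ, e => EF.sat M φ e ∨ EF.sat M ψ e
  | .not φ, e => e ∈ M.E ∧ ¬ EF.sat M φ e
  | .dia π φ, e => ∃ f, PF.sem M π e f ∧ EF.sat M φ f
  | .loop π, e => PF.sem M π e e
/-- Semantics of path formulas as binary relations on events. -/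
def PF.sem {P Lab : Type} (M : MSC P Lab) : PF P Lab → ℕ → ℕ → Prop
  | .next, e, f => M.proc e f
  | .prev, e, f => M.proc f e
  | .msg p q, e, f => M.msg e f ∧ M.loc e = p ∧ M.loc f = q
  | .msgInv p q, e, f => M.msg f e ∧ M.loc f = p ∧ M.loc e = q
  | .nextG φ, e, f => M.procLt e f ∧ ∀ g, M.procLt e g → M.procLt g f → EF.sat M φ g
  | .prevG φ, e, f => M.procLt f e ∧ ∀ g, M.procLt f g → M.procLt g e → EF.sat M φ g
  | .jump p r, e, f => e ∈ M.E ∧ f ∈ M.E ∧ M.loc e = p ∧ M.loc f = r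
  | .test φ, e, f => e = f ∧ EF.sat M φ e
  | .comp π₁ π₂, e, f => ∃ g, PF.sem M π₁ e g ∧ PF.sem M π₂ g f
  | .union π₁ π₂, e, f => PF.sem M π₁ e f ∨ PF.sem M π₂ e f
  | .inter π₁ π₂, e, f => PF.sem M π₁ e f ∧ PF.sem M π₂ e f
  | .compl π, e, f => e ∈ M.E ∧ f ∈ M.E ∧ ¬ PF.sem M π e f
end

/-- Sentences of star-free PDL. -/
inductive PDLS (P Lab : Type) : Type where
  | ex : EF P Lab → PDLS P Lab
  | or : PDLS P Lab → PDLS P Lab → PDLS P Lab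
  | not : PDLS P Lab → PDLS P Lab

/-- Satisfaction of PDL sentences. -/
def PDLS.sat {P Lab : Type} (M : MSC P Lab) : PDLS P Lab → Prop
  | .ex φ => ∃ e ∈ M.E, EF.sat M φ e
  | .or ξ ζ => PDLS.sat M ξ ∨ PDLS.sat M ζ
  | .not ξ => ¬ PDLS.sat M ξ

/-- The four optional operators of star-free PDL. -/
inductive PDLOp : Type where
  | loop | union | inter | compl
deriving DecidableEq

mutual
/-- `EF.inFrag R φ` : the event formula `φ` belongs to the fragment `PDLsf[R]`. -/
def EF.inFrag {P Lab : Type} (R : Set PDLOp) : EF P Lab → Prop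
  | .proc _ => True
  | .lab _ => True
  | .or φ ψ => EF.inFrag R φ ∧ EF.inFrag R ψ
  | .not φ => EF.inFrag R φ
  | .dia π φ => PF.inFrag R π ∧ EF.inFrag R φ
  | .loop π => PDLOp.loop ∈ R ∧ PF.inFrag R π
/-- `PF.inFrag R π` : the path formula `π` belongs to the fragment `PDLsf[R]`. -/
def PF.inFrag {P Lab : Type} (R : Set PDLOp) : PF P Lab → Prop
  | .next => True
  | .prev => True
  | .msg _ _ => True
  | .msgInv _ _ => True
  | .nextG φ => EF.inFrag R φ
  | .prevG φ => EF.inFrag R φ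
  | .jump _ _ => True
  | .test φ => EF.inFrag R φ
  | .comp π₁ π₂ => PF.inFrag R π₁ ∧ PF.inFrag R π₂
  | .union π₁ π₂ => PDLOp.union ∈ R ∧ PF.inFrag R π₁ ∧ PF.inFrag R π₂
  | .inter π₁ π₂ => PDLOp.inter ∈ R ∧ PF.inFrag R π₁ ∧ PF.inFrag R π₂
  | .compl π => PDLOp.compl ∈ R ∧ PF.inFrag R π
end

/-- `PDLS.inFrag R ξ` : the sentence `ξ` belongs to the fragment `PDLsf[R]`. -/
def PDLS.inFrag {P Lab : Type} (R : Set PDLOp) : PDLS P Lab → Prop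
  | .ex φ => EF.inFrag R φ
  | .or ξ ζ => PDLS.inFrag R ξ ∧ PDLS.inFrag R ζ
  | .not ξ => PDLS.inFrag R ξ

/-- Conjunction of event formulas (derived operator). -/
def EF.and {P Lab : Type} (φ ψ : EF P Lab) : EF P Lab :=
  .not (.or (.not φ) (.not ψ))

/-- `isMinOf M π e m` : `m` is the `≤proc`-least element of `⟦π⟧_M(e)`
(in particular `⟦π⟧_M(e)` is nonempty). -/
def isMinOf {P Lab : Type} (M : MSC P Lab) (π : PF P Lab) (e m : ℕ) : Prop :=
  PF.sem M π e m ∧ ∀ f, PF.sem M π e f → M.procLe m f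

/-- `isMaxOf M π e m` : `m` is the `≤proc`-greatest element of `⟦π⟧_M(e)`
(in particular `⟦π⟧_M(e)` is nonempty). -/
def isMaxOf {P Lab : Type} (M : MSC P Lab) (π : PF P Lab) (e m : ℕ) : Prop :=
  PF.sem M π e m ∧ ∀ f, PF.sem M π e f → M.procLe f m

/-! ## MSO/FO logic over MSCs -/

/-- Formulas of MSO over MSCs: first-order kernel with atoms `p(x)`, `a(x)`,
`x = y`, `x → y`, `x ◁ y`, `x ≤ y` and additionally `x ∈ X_k` (monadic
second-order variables, used for the EMSO prefix). -/
inductive FOS (P Lab : Type) : Type where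
  | pred : P → ℕ → FOS P Lab
  | lab : Lab → ℕ → FOS P Lab
  | eq : ℕ → ℕ → FOS P Lab
  | edge : ℕ → ℕ → FOS P Lab
  | medge : ℕ → ℕ → FOS P Lab
  | le : ℕ → ℕ → FOS P Lab
  | inSet : ℕ → ℕ → FOS P Lab
  | or : FOS P Lab → FOS P Lab → FOS P Lab
  | not : FOS P Lab → FOS P Lab
  | ex : ℕ → FOS P Lab → FOS P Lab

/-- Satisfaction, with a first-order valuation `ν` and a second-order valuation `σ`.
First-order quantification ranges over the events of the MSC. -/
def FOS.sat {P Lab : Type} (M : MSC P Lab) : FOS P Lab → (ℕ → ℕ) → (ℕ → Set ℕ) → Prop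
  | .pred p x, ν, _ => M.loc (ν x) = p
  | .lab a x, ν, _ => M.lab (ν x) = a
  | .eq x y, ν, _ => ν x = ν y
  | .edge x y, ν, _ => M.proc (ν x) (ν y)
  | .medge x y, ν, _ => M.msg (ν x) (ν y)
  | .le x y, ν, _ => M.hb (ν x) (ν y)
  | .inSet x k, ν, σ => ν x ∈ σ k
  | .or Φ Ψ, ν, σ => FOS.sat M Φ ν σ ∨ FOS.sat M Ψ ν σ
  | .not Φ, ν, σ => ¬ FOS.sat M Φ ν σ
  | .ex x Φ, ν, σ => ∃ e ∈ M.E, FOS.sat M Φ (Function.update ν x e) σ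

/-- Free first-order variables. -/
def FOS.free {P Lab : Type} : FOS P Lab → Finset ℕ
  | .pred _ x => {x}
  | .lab _ x => {x}
  | .eq x y => {x, y}
  | .edge x y => {x, y}
  | .medge x y => {x, y}
  | .le x y => {x, y}
  | .inSet x _ => {x}
  | .or Φ Ψ => FOS.free Φ ∪ FOS.free Ψ
  | .not Φ => FOS.free Φ
  | .ex x Φ => (FOS.free Φ).erase x

/-- All first-order variables occurring (free or bound). -/
def FOS.vars {P Lab : Type} : FOS P Lab → Finset ℕ
  | .pred _ x => {x}
  | .lab _ x => {x}
  | .eq x y => {x, y}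
  | .edge x y => {x, y}
  | .medge x y => {x, y}
  | .le x y => {x, y}
  | .inSet x _ => {x}
  | .or Φ Ψ => FOS.vars Φ ∪ FOS.vars Ψ
  | .not Φ => FOS.vars Φ
  | .ex x Φ => insert x (FOS.vars Φ)

/-- A formula is first-order (`FO[→,◁,≤]`) iff it contains no set atoms. -/
def FOS.noSets {P Lab : Type} : FOS P Lab → Prop
  | .pred _ _ => True
  | .lab _ _ => True
  | .eq _ _ => True
  | .edge _ _ => True
  | .medge _ _ => True
  | .le _ _ => True
  | .inSet _ _ => False
  | .or Φ Ψ => FOS.noSets Φ ∧ FOS.noSets Ψ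
  | .not Φ => FOS.noSets Φ
  | .ex _ Φ => FOS.noSets Φ

/-! ## Communicating finite-state machines -/

/-- Actions of a process: internal `⟨a⟩`, send `!(a,m,q)`, receive `?(a,m,q)`. -/
inductive CAct (P Lab Msg : Type) : Type where
  | int : Lab → CAct P Lab Msg
  | snd : Lab → Msg → P → CAct P Lab Msg
  | rcv : Lab → Msg → P → CAct P Lab Msg

/-- The label performed by an action. -/
def CAct.label {P Lab Msg : Type} : CAct P Lab Msg → Lab
  | .int a => a
  | .snd a _ _ => a
  | .rcv a _ _ => a

/-- A communicating finite-state machine over `P` and `Lab`. -/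
structure CFM (P Lab : Type) where
  /-- states -/
  S : Type
  finS : Fintype S
  /-- messages -/
  Msg : Type
  finMsg : Fintype Msg
  /-- initial state of each process -/
  ι : P → S
  /-- transition relation of each process -/
  Δ : P → S → CAct P Lab Msg → S → Prop
  Δ_snd : ∀ p s a m q s', Δ p s (.snd a m q) s' → q ≠ p
  Δ_rcv : ∀ p s a m q s', Δ p s (.rcv a m q) s' → q ≠ p
  /-- acceptance condition -/
  Acc : (P → S) → Prop

/-- Existence of an accepting run of a CFM on an MSC. -/
def CFM.Accepts {P Lab : Type} (A : CFM P Lab) (M : MSC P Lab) : Prop :=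
  ∃ (src tgt : ℕ → A.S) (act : ℕ → CAct P Lab A.Msg),
    (∀ e ∈ M.E, A.Δ (M.loc e) (src e) (act e) (tgt e)) ∧
    (∀ e ∈ M.E, (act e).label = M.lab e) ∧
    (∀ e ∈ M.E, (¬ ∃ f, M.proc f e) → src e = A.ι (M.loc e)) ∧
    (∀ e f, M.proc e f → tgt e = src f) ∧
    (∀ e ∈ M.E, (¬ ∃ f, M.msg e f) → (¬ ∃ f, M.msg f e) → ∃ a, act e = .int a) ∧
    (∀ e f, M.msg e f →
      ∃ a a' m, act e = .snd a m (M.loc f) ∧ act f = .rcv a' m (M.loc e)) ∧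
    (∃ fin : P → A.S,
      (∀ p, (∀ e ∈ M.E, M.loc e ≠ p) → fin p = A.ι p) ∧
      (∀ e ∈ M.E, (¬ ∃ f, M.proc e f) → fin (M.loc e) = tgt e) ∧
      A.Acc fin)

/-- The language of a CFM. -/
def CFM.lang {P Lab : Type} (A : CFM P Lab) : Set (MSC P Lab) := {M | A.Accepts M}

/-! ## Letter-to-letter MSC transducers -/

/-- The relation accepted by a letter-to-letter MSC transducer from `Lab` to `Γ`,
i.e., a CFM over `P` and `Lab × Γ`. -/
def Ltrans {P Lab Γ : Type} (A : CFM P (Lab × Γ)) (M : MSC P Lab) (N : MSC P Γ) : Prop :=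
  ∃ γ : ℕ → Γ, N = M.relabel γ ∧ A.Accepts (M.relabel fun e => (M.lab e, γ e))

/-- `M_φ` : the MSC over `Bool` obtained from `M` by labelling each event with
the truth value of the event formula `φ`. -/
noncomputable def MSC.evalEF {P Lab : Type} (M : MSC P Lab) (φ : EF P Lab) : MSC P Bool :=
  M.relabel fun e => @ite Bool (EF.sat M φ e) (Classical.propDecidable _) true false

/-! ## Boolean combinations -/

/-- Boolean combinations over atoms of type `α`. -/
inductive BC (α : Type) : Type where
  | atom : α → BC α
  | or : BC α → BC α → BC α
  | not : BC α → BC α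

/-- Evaluation of a boolean combination given truth values of the atoms. -/
def BC.eval {α : Type} (v : α → Prop) : BC α → Prop
  | .atom a => v a
  | .or b c => BC.eval v b ∨ BC.eval v c
  | .not b => ¬ BC.eval v b

/-- The atoms occurring in a boolean combination. -/
def BC.atoms {α : Type} : BC α → Set α
  | .atom a => {a}
  | .or b c => BC.atoms b ∪ BC.atoms c
  | .not b => BC.atoms b

/-! ## Bounded MSCs -/

/-- `r` is a linearization of `M`: a total order on the events containing
the happened-before relation. -/
def IsLinearization {P Lab : Type} (M : MSC P Lab) (r : ℕ → ℕ → Prop) : Prop :=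
  (∀ e ∈ M.E, r e e) ∧
  (∀ e ∈ M.E, ∀ f ∈ M.E, r e f → r f e → e = f) ∧
  (∀ e ∈ M.E, ∀ f ∈ M.E, ∀ g ∈ M.E, r e f → r f g → r e g) ∧
  (∀ e ∈ M.E, ∀ f ∈ M.E, r e f ∨ r f e) ∧
  (∀ e ∈ M.E, ∀ f ∈ M.E, M.hb e f → r e f)

/-- `r` is a `B`-bounded linearization of `M`: at any point, each channel
contains at most `B` pending messages. -/
def IsBBoundedLin {P Lab : Type} (M : MSC P Lab) (r : ℕ → ℕ → Prop) (B : ℕ) : Prop :=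
  IsLinearization M r ∧
  ∀ g ∈ M.E, ∀ p q : P, p ≠ q →
    Set.ncard {ef : ℕ × ℕ | M.msg ef.1 ef.2 ∧ M.loc ef.1 = p ∧ M.loc ef.2 = q ∧
      r ef.1 g ∧ ¬ r ef.2 g} ≤ B

/-- `M` is `∃B`-bounded: some linearization of `M` is `B`-bounded. -/
def ExistsBBounded {P Lab : Type} (M : MSC P Lab) (B : ℕ) : Prop :=
  ∃ r : ℕ → ℕ → Prop, IsBBoundedLin M r B

/-- `g` is a send event on channel `(p,q)`. -/
def isSendOn {P Lab : Type} (M : MSC P Lab) (p q : P) (g : ℕ) : Prop :=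
  M.loc g = p ∧ ∃ h, M.msg g h ∧ M.loc h = q

/-- `revB M B f g` : `f` is a receive event with matching send `e` on some
channel `(p,q)`, and `g` is the `B`-th send on channel `(p,q)` strictly after `e`. -/
def revB {P Lab : Type} (M : MSC P Lab) (B : ℕ) (f g : ℕ) : Prop :=
  ∃ e, M.msg e f ∧ isSendOn M (M.loc e) (M.loc f) g ∧ M.procLt e g ∧
    Set.ncard {g' | isSendOn M (M.loc e) (M.loc f) g' ∧ M.procLt e g' ∧ M.procLe g' g} = B

/-- `≤_B = (≤ ∪ rev_B)*`. -/
def leB {P Lab : Type} (M : MSC P Lab) (B : ℕ) : ℕ → ℕ → Prop :=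
  Relation.ReflTransGen (fun a b => (M.proc a b ∨ M.msg a b) ∨ revB M B a b)

/-- `<_B`, the strict part of `≤_B`. -/
def ltB {P Lab : Type} (M : MSC P Lab) (B : ℕ) (e f : ℕ) : Prop :=
  leB M B e f ∧ ¬ leB M B f e

/-- `e ∥_B f` : incomparable w.r.t. `≤_B`. -/
def parB {P Lab : Type} (M : MSC P Lab) (B : ℕ) (e f : ℕ) : Prop :=
  ¬ leB M B e f ∧ ¬ leB M B f e

/-- `↑_B e = {g : e ≤_B g}`. -/
def upB {P Lab : Type} (M : MSC P Lab) (B : ℕ) (e : ℕ) : Set ℕ :=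
  {g | leB M B e g}

/-- The order `≺_B` (w.r.t. a fixed total order on `P`): `e ≺_B f` iff `e <_B f`, or
`e ∥_B f` and the `⊑`-minimum of `loc(↑_B e \ ↑_B f)` is strictly below the
`⊑`-minimum of `loc(↑_B f \ ↑_B e)`. -/
def precB {P Lab : Type} [LinearOrder P] (M : MSC P Lab) (B : ℕ) (e f : ℕ) : Prop :=
  ltB M B e f ∨
    (parB M B e f ∧ ∃ p ∈ M.loc '' (upB M B e \ upB M B f),
      ∀ q ∈ M.loc '' (upB M B f \ upB M B e), p < q)
/-!
Count, for an event `e` and a process `p`, the events of `p` that are not `≥_B e`. Since `≤_B`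
contains the process order, the up-sets `↑_B e` meet each process in a final segment, so for two
events `e, f` the process `p` lies in `loc(↑_B e \ ↑_B f)` exactly when `e` leaves fewer events of
`p` unreached than `f` does. Hence `≺_B` is the lexicographic order (processes ordered by `⊑`) on
these count vectors. `∃B`-boundedness makes `≤_B` antisymmetric: every `rev_B` edge `(f, g)` goes
forward in a `B`-bounded linearization, since otherwise `B + 1` messages of one channel would be
pending at `g`. Antisymmetry makes the count vectors of distinct events distinct, and the
lexicographic order is linear.
-/

theorem Pi.toLex_lt_iff_exists_forall_lt {ι : Type*} {β : ι → Type*} [LinearOrder ι]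
    [WellFoundedLT ι] [∀ i, LinearOrder (β i)] {x y : ∀ i, β i} :
    toLex x < toLex y ↔ ∃ i, x i < y i ∧ ∀ j, y j < x j → i < j := by
  constructor
  · rintro ⟨i, heq, hi⟩
    refine ⟨i, hi, fun j hj => lt_of_not_ge fun hji => ?_⟩
    rcases hji.lt_or_eq with hji | rfl
    · exact (heq j hji).not_gt hj
    · exact hi.asymm hj
  · rintro ⟨i, hi, hgt⟩
    obtain ⟨j, hj, hmin⟩ := wellFounded_lt.has_min {j | x j ≠ y j} ⟨i, hi.ne⟩
    refine ⟨j, fun k hk => not_not.1 fun hne => hmin k hne hk, ?_⟩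
    exact (lt_or_gt_of_ne hj).resolve_right fun hj => hmin i hi.ne (hgt j hj)

namespace MSC

variable {P Lab : Type} {M : MSC P Lab} {B : ℕ}

theorem leB_of_procLe {a b : ℕ} (h : M.procLe a b) : leB M B a b :=
  Relation.ReflTransGen.mono (fun _ _ h => Or.inl (Or.inl h)) _ _ h

theorem hb_of_procLe {a b : ℕ} (h : M.procLe a b) : M.hb a b :=
  Relation.ReflTransGen.mono (fun _ _ h => Or.inl h) _ _ h

theorem mem_E_of_leB {e f : ℕ} (he : e ∈ M.E) (h : leB M B e f) : f ∈ M.E := by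
  induction h with
  | refl => exact he
  | tail _ hstep _ =>
    rcases hstep with (h | h) | ⟨_, _, ⟨_, h, hgh, _⟩, _⟩
    · exact (M.proc_mem _ _ h).2
    · exact (M.msg_mem _ _ h).2
    · exact (M.msg_mem _ h hgh).1

theorem leB_or_leB_of_loc_eq {x y : ℕ} (hx : x ∈ M.E) (hy : y ∈ M.E) (h : M.loc x = M.loc y) :
    leB M B x y ∨ leB M B y x := by
  rcases M.proc_total x y hx hy h with rfl | hxy | hyx
  · exact Or.inl .refl
  · exact Or.inl (leB_of_procLe hxy.to_reflTransGen)
  · exact Or.inr (leB_of_procLe hyx.to_reflTransGen)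

theorem ncard_channel_msgs {e f g : ℕ} (hef : M.msg e f) (heg : M.procLe e g) :
    {m : ℕ × ℕ | M.msg m.1 m.2 ∧ M.loc m.1 = M.loc e ∧ M.loc m.2 = M.loc f ∧
      M.procLe e m.1 ∧ M.procLe m.1 g}.ncard =
    {g' | isSendOn M (M.loc e) (M.loc f) g' ∧ M.procLt e g' ∧ M.procLe g' g}.ncard + 1 := by
  have hinj : Set.InjOn Prod.fst {m : ℕ × ℕ | M.msg m.1 m.2} := by
    rintro ⟨x, y⟩ hxy ⟨x', y'⟩ hxy' (rfl : x = x')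
    rw [(M.msg_once x y x y' hxy hxy' (Or.inl rfl)).2]
  have hnotMem : e ∉ {g' | isSendOn M (M.loc e) (M.loc f) g' ∧ M.procLt e g' ∧ M.procLe g' g} :=
    fun h => M.acyclic e (Relation.TransGen.mono (fun _ _ h => Or.inl h) _ _ h.2.1)
  rw [← (hinj.mono fun m hm => hm.1).ncard_image,
    ← Set.ncard_insert_of_notMem hnotMem
      (M.E.finite_toSet.subset fun x ⟨⟨_, _, hxy, _⟩, _⟩ => (M.msg_mem x _ hxy).1)]
  congr 1
  ext x
  simp only [Set.mem_image, Set.mem_ofPred_eq, Set.mem_insert_iff, isSendOn, Prod.exists,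
    exists_and_right, exists_eq_right]
  constructor
  · rintro ⟨y, hxy, hx, hy, hex, hxg⟩
    rcases Relation.reflTransGen_iff_eq_or_transGen.1 hex with rfl | hex
    · exact Or.inl rfl
    · exact Or.inr ⟨⟨hx, y, hxy, hy⟩, hex, hxg⟩
  · rintro (rfl | ⟨⟨hx, y, hxy, hy⟩, hex, hxg⟩)
    · exact ⟨f, hef, rfl, rfl, .refl, heg⟩
    · exact ⟨y, hxy, hx, hy, hex.to_reflTransGen, hxg⟩

theorem IsBBoundedLin.rel_of_revB {r : ℕ → ℕ → Prop} (hr : IsBBoundedLin M r B) {f g : ℕ}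
    (h : revB M B f g) : r f g := by
  obtain ⟨⟨-, -, htrans, -, hhb⟩, hbound⟩ := hr
  obtain ⟨e, hef, ⟨-, h, hgh, -⟩, heg, hcard⟩ := h
  have hf := (M.msg_mem e f hef).2
  have hg := (M.msg_mem g h hgh).1
  by_contra hfg
  -- FIFO: a message sent after `e` is received after `f`, hence, like `f`, after `g`.
  have hpending :
      {m : ℕ × ℕ | M.msg m.1 m.2 ∧ M.loc m.1 = M.loc e ∧ M.loc m.2 = M.loc f ∧
        M.procLe e m.1 ∧ M.procLe m.1 g} ⊆
      {m : ℕ × ℕ | M.msg m.1 m.2 ∧ M.loc m.1 = M.loc e ∧ M.loc m.2 = M.loc f ∧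
        r m.1 g ∧ ¬ r m.2 g} := by
    rintro ⟨x, y⟩ ⟨hxy, hx, hy, hex, hxg⟩
    obtain ⟨hxE, hyE⟩ := M.msg_mem x y hxy
    have hfy : M.procLe f y := (M.fifo e f x y hef hxy hx.symm hy.symm).1 hex
    refine ⟨hxy, hx, hy, hhb x hxE g hg (hb_of_procLe hxg), fun hyg => hfg ?_⟩
    exact htrans f hf y hyE g hg (hhb f hf y hyE (hb_of_procLe hfy)) hyg
  have hle := (Set.ncard_le_ncard hpending ((M.E.finite_toSet.prod M.E.finite_toSet).subset
    fun m hm => M.msg_mem _ _ hm.1)).trans (hbound g hg _ _ (M.msg_loc e f hef))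
  rw [ncard_channel_msgs hef heg.to_reflTransGen, hcard] at hle
  omega

theorem IsBBoundedLin.rel_of_leB {r : ℕ → ℕ → Prop} (hr : IsBBoundedLin M r B) {e f : ℕ}
    (he : e ∈ M.E) (h : leB M B e f) : r e f := by
  obtain ⟨hrefl, -, htrans, -, hhb⟩ := hr.1
  induction h with
  | refl => exact hrefl e he
  | @tail x y hex hxy ih =>
    have hx := mem_E_of_leB he hex
    have hy := mem_E_of_leB hx (.single hxy)
    refine htrans e he x hx y hy ih ?_
    rcases hxy with hxy | hxy
    · exact hhb x hx y hy (.single hxy)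
    · exact IsBBoundedLin.rel_of_revB hr hxy

theorem leB_antisymm (hM : ExistsBBounded M B) {e f : ℕ} (he : e ∈ M.E)
    (hef : leB M B e f) (hfe : leB M B f e) : e = f := by
  obtain ⟨r, hr⟩ := hM
  have hf := mem_E_of_leB he hef
  exact hr.1.2.1 e he f hf (IsBBoundedLin.rel_of_leB hr he hef)
    (IsBBoundedLin.rel_of_leB hr hf hfe)

noncomputable def unreachedCard (M : MSC P Lab) (B : ℕ) (e : ℕ) (p : P) : ℕ :=
  {x | x ∈ M.E ∧ M.loc x = p ∧ ¬ leB M B e x}.ncard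

theorem unreachedCard_le_of_leB {e f : ℕ} (h : leB M B e f) (p : P) :
    unreachedCard M B e p ≤ unreachedCard M B f p :=
  Set.ncard_le_ncard (fun _ ⟨hx, hxp, hex⟩ => ⟨hx, hxp, fun hfx => hex (h.trans hfx)⟩)
    (M.E.finite_toSet.subset fun _ hx => hx.1)

theorem unreachedCard_loc_lt {e f x : ℕ} (he : e ∈ M.E) (hex : leB M B e x)
    (hfx : ¬ leB M B f x) : unreachedCard M B e (M.loc x) < unreachedCard M B f (M.loc x) := by
  have hx := mem_E_of_leB he hex
  refine Set.ncard_lt_ncard ⟨fun y ⟨hy, hyx, hey⟩ => ⟨hy, hyx, fun hfy => ?_⟩,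
    fun hsub => (hsub ⟨hx, rfl, hfx⟩).2.2 hex⟩ (M.E.finite_toSet.subset fun _ hy => hy.1)
  rcases leB_or_leB_of_loc_eq hx hy hyx.symm with hxy | hyx
  · exact hey (hex.trans hxy)
  · exact hfx (hfy.trans hyx)

theorem exists_of_unreachedCard_lt {e f : ℕ} {p : P}
    (h : unreachedCard M B e p < unreachedCard M B f p) :
    ∃ x, leB M B e x ∧ M.loc x = p ∧ ¬ leB M B f x := by
  by_contra! hc
  refine h.not_ge (Set.ncard_le_ncard ?_ (M.E.finite_toSet.subset fun _ hx => hx.1))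
  exact fun x ⟨hx, hxp, hfx⟩ => ⟨hx, hxp, fun hex => hfx (hc x hex hxp)⟩

theorem mem_loc_image_upB_diff_iff {e f : ℕ} {p : P} (he : e ∈ M.E) :
    p ∈ M.loc '' (upB M B e \ upB M B f) ↔ unreachedCard M B e p < unreachedCard M B f p := by
  constructor
  · rintro ⟨x, ⟨hex, hfx⟩, rfl⟩
    exact unreachedCard_loc_lt he hex hfx
  · intro h
    obtain ⟨x, hex, rfl, hfx⟩ := exists_of_unreachedCard_lt h
    exact ⟨x, ⟨hex, hfx⟩, rfl⟩

theorem toLex_unreachedCard_lt_of_ltB [LinearOrder P] [WellFoundedLT P] {e f : ℕ}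
    (he : e ∈ M.E) (h : ltB M B e f) :
    toLex (unreachedCard M B e) < toLex (unreachedCard M B f) :=
  Pi.toLex_strictMono <| Pi.lt_def.2
    ⟨unreachedCard_le_of_leB h.1, M.loc e, unreachedCard_loc_lt he .refl h.2⟩

theorem precB_iff_toLex_lt [LinearOrder P] [WellFoundedLT P] (hM : ExistsBBounded M B)
    {e f : ℕ} (he : e ∈ M.E) (hf : f ∈ M.E) :
    precB M B e f ↔ toLex (unreachedCard M B e) < toLex (unreachedCard M B f) := by
  simp only [precB, mem_loc_image_upB_diff_iff he, mem_loc_image_upB_diff_iff hf,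
    ← Pi.toLex_lt_iff_exists_forall_lt]
  constructor
  · rintro (h | ⟨-, h⟩)
    exacts [toLex_unreachedCard_lt_of_ltB he h, h]
  · intro h
    by_cases hef : leB M B e f <;> by_cases hfe : leB M B f e
    · cases leB_antisymm hM he hef hfe
      exact absurd h (lt_irrefl _)
    · exact Or.inl ⟨hef, hfe⟩
    · exact absurd h (toLex_unreachedCard_lt_of_ltB hf ⟨hfe, hef⟩).asymm
    · exact Or.inr ⟨⟨hef, hfe⟩, h⟩

theorem injOn_unreachedCard (hM : ExistsBBounded M B) : Set.InjOn (unreachedCard M B) M.E := by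
  intro e he f hf h
  by_contra hne
  by_cases hfe : leB M B f e
  · have hef : ¬ leB M B e f := fun hef => hne (leB_antisymm hM he hef hfe)
    exact (unreachedCard_loc_lt hf .refl hef).ne' (congrFun h (M.loc f))
  · exact (unreachedCard_loc_lt he .refl hfe).ne (congrFun h (M.loc e))

end MSC

/-- For an `∃B`-bounded MSC `M`, the relation `≺_B` is a
strict linear order on the event set: irreflexive, transitive, and total. -/
theorem precB_strict_linear_order {P Lab : Type}
    [Fintype P] [Nonempty P] [LinearOrder P] [Fintype Lab] [Nonempty Lab]
    (B : ℕ) (M : MSC P Lab) (hM : ExistsBBounded M B) :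
    (∀ e ∈ M.E, ¬ precB M B e e) ∧
    (∀ e ∈ M.E, ∀ f ∈ M.E, ∀ g ∈ M.E, precB M B e f → precB M B f g → precB M B e g) ∧
    (∀ e ∈ M.E, ∀ f ∈ M.E, e ≠ f → precB M B e f ∨ precB M B f e) := by
  have key {e f : ℕ} (he : e ∈ M.E) (hf : f ∈ M.E) := MSC.precB_iff_toLex_lt hM he hf
  refine ⟨fun e he h => lt_irrefl _ ((key he he).1 h),
    fun e he f hf g hg hef hfg =>
      (key he hg).2 (((key he hf).1 hef).trans ((key hf hg).1 hfg)),
    fun e he f hf hne => ?_⟩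
  rw [key he hf, key hf he]
  exact lt_or_gt_of_ne (toLex.injective.ne ((MSC.injOn_unreachedCard hM).ne he hf hne))
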